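/- In the coordinates w = (x_a, x_u, x_a - x_c), if x_a, x_u, x_c satisfy the closed-loop equations obtained by substituting the control law u = -(J_{aa}+D_{c1}+D_{c2}+D_{c3})∇_{x_a}ℋ - (D_{c1}+D_{c3})K_i(x_a - x_c), ẋ_c = -(D_{c2}+D_{c3})∇_{x_a}ℋ + J_{au}∇_{x_u}ℋ into the disturbed pH system, then w satisfies ẇ = (𝒥 - ℛ)∇𝒲 with 𝒥 = [[0, J_{au}, 0],[-J_{au}^T, J_{uu}, 0],[0,0,0]], ℛ = [[R_{aa}+D_{c1}+D_{c2}+D_{c3}, R_{au}, D_{c1}+D_{c3}],[R_{au}^T, R_{uu}, 0],[R_{aa}+D_{c1}, R_{au}, D_{c1}+D_{c3}]], and 𝒲(w) = ℋ(w_a,w_u) + ½‖w_c + K_i^{-1}(D_{c1}+D_{c3})^{-1}d‖²_{K_i}. -/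

import Mathlib

/-!
Put `g_c := K_i (x_a - x_c) + (D_{c1} + D_{c3})⁻¹ d`. The shift `K_i⁻¹ (D_{c1} + D_{c3})⁻¹ d` in `𝒲`
is chosen so that `g_c` is the `w_c`-block of `∇𝒲` and `(D_{c1} + D_{c3}) g_c` is the integral
term of the control law plus the disturbance `d`; so the closed loop turns `ẋ_a`, `ẋ_u` and
`ẋ_a - ẋ_c` into linear expressions in `(∇_{x_a}ℋ, ∇_{x_u}ℋ, g_c)`, and matching them with the
block rows of `(𝒥 - ℛ) ∇𝒲` is a matrix computation. The gradient of `𝒲` is computed from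
`∇(f ∘ L) = L† ∇f`, where `L†` is extension by zero when `L` restricts to a set of coordinates.
-/

open Matrix

/-- View a plain vector as an element of Euclidean space. -/
noncomputable def toE {ι : Type*} [Fintype ι] (v : ι → ℝ) : EuclideanSpace ℝ ι :=
  (WithLp.equiv 2 _).symm v

/-- View an element of Euclidean space as a plain vector. -/
def toV {ι : Type*} [Fintype ι] (v : EuclideanSpace ℝ ι) : ι → ℝ :=
  WithLp.equiv 2 _ v

open scoped RealInnerProductSpace

section Gradient
variable {E F : Type*} [NormedAddCommGroup E] [InnerProductSpace ℝ E] [CompleteSpace E]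
  [NormedAddCommGroup F] [InnerProductSpace ℝ F] [CompleteSpace F]

theorem HasGradientAt.add {f g : E → ℝ} {f' g' x : E} (hf : HasGradientAt f f' x)
    (hg : HasGradientAt g g' x) : HasGradientAt (fun y => f y + g y) (f' + g') x := by
  rw [hasGradientAt_iff_hasFDerivAt] at hf hg ⊢
  rw [map_add]
  exact hf.add hg

theorem HasGradientAt.comp_continuousLinearMap {f : F → ℝ} {g : F} {x : E} (L : E →L[ℝ] F)
    (hf : HasGradientAt f g (L x)) : HasGradientAt (fun y => f (L y)) (L.adjoint g) x := by
  rw [hasGradientAt_iff_hasFDerivAt] at *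
  refine (hf.comp x L.hasFDerivAt).congr_fderiv ?_
  ext v
  simp [ContinuousLinearMap.adjoint_inner_left]

theorem hasGradientAt_half_inner_self_add {T : E →L[ℝ] E} (hT : IsSelfAdjoint T) (c x : E) :
    HasGradientAt (fun y => (1 / 2 : ℝ) * ⟪y + c, T (y + c)⟫) (T (x + c)) x := by
  rw [hasGradientAt_iff_hasFDerivAt]
  have hshift := (hasFDerivAt_id (𝕜 := ℝ) x).add_const c
  refine ((HasFDerivAt.inner ℝ hshift (T.hasFDerivAt.comp x hshift)).const_mul
    (1 / 2 : ℝ)).congr_fderiv ?_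
  ext v
  have hsymm : ⟪x + c, T v⟫ = ⟪T (x + c), v⟫ := (hT.isSymmetric (x + c) v).symm
  simp [fderivInnerCLM_apply, hsymm, real_inner_comm, inner_add_right]
  ring

end Gradient

section Coordinates
variable {ι κ : Type*} [Fintype ι] [Fintype κ]

theorem ofLp_toE (v : ι → ℝ) : (toE v).ofLp = v := rfl

noncomputable def restrictCLM (e : κ → ι) :
    EuclideanSpace ℝ ι →L[ℝ] EuclideanSpace ℝ κ :=
  LinearMap.toContinuousLinearMap <|
    (WithLp.linearEquiv 2 ℝ (κ → ℝ)).symm.toLinearMap ∘ₗ LinearMap.funLeft ℝ ℝ e ∘ₗ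
      (WithLp.linearEquiv 2 ℝ (ι → ℝ)).toLinearMap

theorem restrictCLM_apply (e : κ → ι) (w : EuclideanSpace ℝ ι) :
    restrictCLM e w = toE (toV w ∘ e) := rfl

theorem adjoint_restrictCLM {e : κ → ι} (he : e.Injective) (g : EuclideanSpace ℝ κ) :
    (restrictCLM e).adjoint g = toE (Function.extend e (toV g) 0) := by
  refine ext_inner_right ℝ fun v => ?_
  rw [ContinuousLinearMap.adjoint_inner_left, restrictCLM_apply]
  simp only [EuclideanSpace.inner_eq_star_dotProduct, toE, toV, dotProduct]
  exact Fintype.sum_of_injective e he _ _ (fun i hi => by simp [Function.extend_apply' _ _ _ hi])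
    fun k => by simp [he.extend_apply]

end Coordinates

theorem Matrix.IsSymm.isSelfAdjoint_toEuclideanCLM {γ : Type*} [Fintype γ] [DecidableEq γ]
    {K : Matrix γ γ ℝ} (hK : K.IsSymm) : IsSelfAdjoint (toEuclideanCLM (𝕜 := ℝ) K) := by
  refine IsSelfAdjoint.map ?_ _
  rw [IsSelfAdjoint, star_eq_conjTranspose, conjTranspose_eq_transpose_of_trivial]
  exact hK

theorem hasGradientAt_add_half_quadForm {α β γ : Type*} [Fintype α] [Fintype β] [Fintype γ]
    [DecidableEq γ] {H : EuclideanSpace ℝ (α ⊕ β) → ℝ} {g : EuclideanSpace ℝ (α ⊕ β)}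
    {K : Matrix γ γ ℝ} (hK : K.IsSymm) (c : γ → ℝ) (a : α → ℝ) (b : β → ℝ) (z : γ → ℝ)
    (hH : HasGradientAt H g (toE (Sum.elim a b))) :
    HasGradientAt (fun w : EuclideanSpace ℝ (α ⊕ (β ⊕ γ)) =>
        H (toE (Sum.elim (fun i => toV w (Sum.inl i)) (fun j => toV w (Sum.inr (Sum.inl j))))) +
        (1 / 2) * (((fun k => toV w (Sum.inr (Sum.inr k))) + c) ⬝ᵥ
          K *ᵥ ((fun k => toV w (Sum.inr (Sum.inr k))) + c)))
      (toE (Sum.elim (fun i => toV g (Sum.inl i))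
        (Sum.elim (fun j => toV g (Sum.inr j)) (K *ᵥ (z + c)))))
      (toE (Sum.elim a (Sum.elim b z))) := by
  set w₀ : EuclideanSpace ℝ (α ⊕ (β ⊕ γ)) := toE (Sum.elim a (Sum.elim b z))
  set eH : α ⊕ β → α ⊕ (β ⊕ γ) := Sum.elim Sum.inl (Sum.inr ∘ Sum.inl)
  set eK : γ → α ⊕ (β ⊕ γ) := Sum.inr ∘ Sum.inr
  have heH : eH.Injective :=
    Sum.inl_injective.sumElim (Sum.inr_injective.comp Sum.inl_injective) (by simp)
  have heK : eK.Injective := Sum.inr_injective.comp Sum.inr_injective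
  have hH_restrict : ∀ w, restrictCLM eH w =
      toE (Sum.elim (fun i => toV w (Sum.inl i)) (fun j => toV w (Sum.inr (Sum.inl j)))) := by
    intro w; rw [restrictCLM_apply]; congr 1; funext k; cases k <;> rfl
  have hH' : HasGradientAt H g (restrictCLM eH w₀) := by rwa [hH_restrict]
  have hK' := hasGradientAt_half_inner_self_add hK.isSelfAdjoint_toEuclideanCLM (toE c)
    (restrictCLM eK w₀)
  convert (hH'.comp_continuousLinearMap _).add (hK'.comp_continuousLinearMap _) using 1
  · funext w
    rw [hH_restrict, inner_toEuclideanCLM]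
    rfl
  · rw [adjoint_restrictCLM heH, adjoint_restrictCLM heK]
    ext (i | j | k)
    · have hH_i : Function.extend eH (toV g) 0 (Sum.inl i) = toV g (Sum.inl i) :=
        heH.extend_apply _ _ (Sum.inl i)
      have hK_i (f : γ → ℝ) : Function.extend eK f 0 (Sum.inl i) = 0 :=
        Function.extend_apply' _ _ _ (by rintro ⟨k, ⟨⟩⟩)
      simp only [PiLp.add_apply, ofLp_toE, hH_i, hK_i, add_zero, Sum.elim_inl]
    · have hH_j : Function.extend eH (toV g) 0 (Sum.inr (Sum.inl j)) = toV g (Sum.inr j) :=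
        heH.extend_apply _ _ (Sum.inr j)
      have hK_j (f : γ → ℝ) : Function.extend eK f 0 (Sum.inr (Sum.inl j)) = 0 :=
        Function.extend_apply' _ _ _ (by rintro ⟨k, ⟨⟩⟩)
      simp only [PiLp.add_apply, ofLp_toE, hH_j, hK_j, add_zero, Sum.elim_inl, Sum.elim_inr]
    · have hH_k : Function.extend eH (toV g) 0 (Sum.inr (Sum.inr k)) = 0 :=
        Function.extend_apply' _ _ _ (by rintro ⟨i | j, ⟨⟩⟩)
      have hK_k (f : γ → ℝ) : Function.extend eK f 0 (Sum.inr (Sum.inr k)) = f k :=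
        heK.extend_apply _ _ k
      simp only [PiLp.add_apply, ofLp_toE, hH_k, hK_k, zero_add, Sum.elim_inr]
      rfl

theorem HasDerivAt.sumElim {𝕜 α β F : Type*} [NontriviallyNormedField 𝕜] [Fintype α] [Fintype β]
    [NormedAddCommGroup F] [NormedSpace 𝕜 F] {f : 𝕜 → α → F} {g : 𝕜 → β → F}
    {f' : α → F} {g' : β → F} {t : 𝕜} (hf : HasDerivAt f f' t) (hg : HasDerivAt g g' t) :
    HasDerivAt (fun τ => Sum.elim (f τ) (g τ)) (Sum.elim f' g') t :=
  hasDerivAt_pi.2 fun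
    | .inl i => hasDerivAt_pi.1 hf i
    | .inr j => hasDerivAt_pi.1 hg j

theorem HasDerivAt.toE {ι : Type*} [Fintype ι] {f : ℝ → ι → ℝ} {f' : ι → ℝ} {t : ℝ}
    (hf : HasDerivAt f f' t) : HasDerivAt (fun τ => toE (f τ)) (toE f') t :=
  (PiLp.hasFDerivAt_toLp 2 (f t)).comp_hasDerivAt t hf

theorem blockForm_mulVec_eq_closedLoop {α β : Type*} [Fintype α] [DecidableEq α] [Fintype β]
    (Jaa Raa Ki D1 D2 D3 : Matrix α α ℝ) (Juu Ruu : Matrix β β ℝ) (Jau Rau : Matrix α β ℝ)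
    (ga wc d : α → ℝ) (gu : β → ℝ) (hD : IsUnit (D1 + D3)) :
    let u := -((Jaa + D1 + D2 + D3) *ᵥ ga) - (D1 + D3) *ᵥ (Ki *ᵥ wc)
    let va := (Jaa - Raa) *ᵥ ga + (Jau - Rau) *ᵥ gu + u - d
    (fromBlocks 0 (fromCols Jau 0) (fromRows (-Jauᵀ) 0) (fromBlocks Juu 0 0 0)
      - fromBlocks (Raa + D1 + D2 + D3) (fromCols Rau (D1 + D3)) (fromRows Rauᵀ (Raa + D1))
          (fromBlocks Ruu 0 Rau (D1 + D3))) *ᵥ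
        Sum.elim ga (Sum.elim gu (Ki *ᵥ wc + (D1 + D3)⁻¹ *ᵥ d)) =
      Sum.elim va (Sum.elim ((-Jauᵀ - Rauᵀ) *ᵥ ga + (Juu - Ruu) *ᵥ gu)
        (va - (-((D2 + D3) *ᵥ ga) + Jau *ᵥ gu))) := by
  intro u va
  have hd : (D1 + D3) *ᵥ ((D1 + D3)⁻¹ *ᵥ d) = d := by
    rw [mulVec_mulVec, mul_nonsing_inv _ (isUnit_iff_isUnit_det _ |>.1 hD), one_mulVec]
  ext (i | j | i) <;>
    simp only [u, va, sub_mulVec, add_mulVec, neg_mulVec, zero_mulVec, mulVec_add, hd,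
      fromBlocks_mulVec, fromRows_mulVec, fromCols_mulVec_sumElim, Sum.elim_inl, Sum.elim_inr,
      Sum.elim_comp_inl, Sum.elim_comp_inr, Pi.add_apply, Pi.sub_apply, Pi.neg_apply,
      Pi.zero_apply] <;>
    ring

theorem stmt_16_general {m s : ℕ}
    (H : EuclideanSpace ℝ (Fin m ⊕ Fin s) → ℝ) (hH : ContDiff ℝ 1 H)
    (Jaa Raa : EuclideanSpace ℝ (Fin m ⊕ Fin s) → Matrix (Fin m) (Fin m) ℝ)
    (Juu Ruu : EuclideanSpace ℝ (Fin m ⊕ Fin s) → Matrix (Fin s) (Fin s) ℝ)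
    (Jau Rau : EuclideanSpace ℝ (Fin m ⊕ Fin s) → Matrix (Fin m) (Fin s) ℝ)
    (Ki Dc1 Dc2 Dc3 : Matrix (Fin m) (Fin m) ℝ)
    (hKisymm : Ki.IsSymm) (hKi : Ki.PosDef)
    (hDc1 : Dc1.PosDef)
    (hDc3 : Dc3.PosDef)
    (d : Fin m → ℝ)
    (W : EuclideanSpace ℝ (Fin m ⊕ (Fin s ⊕ Fin m)) → ℝ)
    (hW : W = fun w =>
      H (toE (Sum.elim (fun i => toV w (Sum.inl i)) (fun j => toV w (Sum.inr (Sum.inl j))))) +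
      (1 / 2) * (((fun i => toV w (Sum.inr (Sum.inr i))) + Ki⁻¹.mulVec ((Dc1 + Dc3)⁻¹.mulVec d)) ⬝ᵥ
        Ki.mulVec ((fun i => toV w (Sum.inr (Sum.inr i))) + Ki⁻¹.mulVec ((Dc1 + Dc3)⁻¹.mulVec d))))
    (xa xc : ℝ → Fin m → ℝ) (xu : ℝ → Fin s → ℝ) (t : ℝ)
    -- state, gradient blocks and the control law at time `t`
    (X : EuclideanSpace ℝ (Fin m ⊕ Fin s)) (hX : X = toE (Sum.elim (xa t) (xu t)))
    (ga : Fin m → ℝ) (hga : ga = fun i => toV (gradient H X) (Sum.inl i))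
    (gu : Fin s → ℝ) (hgu : gu = fun j => toV (gradient H X) (Sum.inr j))
    (u : Fin m → ℝ)
    (hu : u = -(Jaa X + Dc1 + Dc2 + Dc3).mulVec ga - (Dc1 + Dc3).mulVec (Ki.mulVec (xa t - xc t)))
    -- the disturbed open-loop dynamics in closed loop with the controller
    (hxa : HasDerivAt xa
      ((Jaa X - Raa X).mulVec ga + (Jau X - Rau X).mulVec gu + u - d) t)
    (hxu : HasDerivAt xu
      ((-(Jau X)ᵀ - (Rau X)ᵀ).mulVec ga + (Juu X - Ruu X).mulVec gu) t)
    (hxc : HasDerivAt xc (-(Dc2 + Dc3).mulVec ga + (Jau X).mulVec gu) t) :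
    HasDerivAt (fun τ => toE (Sum.elim (xa τ) (Sum.elim (xu τ) (xa τ - xc τ))))
      (toE (((Matrix.fromBlocks (0 : Matrix (Fin m) (Fin m) ℝ)
            (Matrix.fromCols (Jau X) (0 : Matrix (Fin m) (Fin m) ℝ))
            (Matrix.fromRows (-(Jau X)ᵀ) (0 : Matrix (Fin m) (Fin m) ℝ))
            (Matrix.fromBlocks (Juu X) (0 : Matrix (Fin s) (Fin m) ℝ)
              (0 : Matrix (Fin m) (Fin s) ℝ) (0 : Matrix (Fin m) (Fin m) ℝ)))
          - (Matrix.fromBlocks (Raa X + Dc1 + Dc2 + Dc3)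
              (Matrix.fromCols (Rau X) (Dc1 + Dc3))
              (Matrix.fromRows (Rau X)ᵀ (Raa X + Dc1))
              (Matrix.fromBlocks (Ruu X) (0 : Matrix (Fin s) (Fin m) ℝ)
                (Rau X) (Dc1 + Dc3)))).mulVec
        (toV (gradient W (toE (Sum.elim (xa t) (Sum.elim (xu t) (xa t - xc t)))))))) t := by
  have hD : IsUnit (Dc1 + Dc3) := (hDc1.add hDc3).isUnit
  have hgradW : gradient W (toE (Sum.elim (xa t) (Sum.elim (xu t) (xa t - xc t)))) =
      toE (Sum.elim ga (Sum.elim gu (Ki *ᵥ (xa t - xc t) + (Dc1 + Dc3)⁻¹ *ᵥ d))) := by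
    have hHX : HasGradientAt H (gradient H X) (toE (Sum.elim (xa t) (xu t))) :=
      hX ▸ (hH.differentiable one_ne_zero X).hasGradientAt
    rw [hW, (hasGradientAt_add_half_quadForm hKisymm _ _ _ _ hHX).gradient, mulVec_add,
      mulVec_mulVec, mul_nonsing_inv _ (isUnit_iff_isUnit_det _ |>.1 hKi.isUnit), one_mulVec,
      hga, hgu]
  rw [hgradW]
  have hcurve : HasDerivAt (fun τ => toE (Sum.elim (xa τ) (Sum.elim (xu τ) (xa τ - xc τ)))) _ t :=
    (hxa.sumElim (hxu.sumElim (hxa.sub hxc))).toE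
  convert hcurve using 2
  subst hu
  exact blockForm_mulVec_eq_closedLoop (Jaa X) (Raa X) Ki Dc1 Dc2 Dc3 (Juu X) (Ruu X) (Jau X) (Rau X)
    ga (xa t - xc t) d gu hD

theorem stmt_16 {m s : ℕ}
    (H : EuclideanSpace ℝ (Fin m ⊕ Fin s) → ℝ) (hH : ContDiff ℝ 1 H)
    (Jaa Raa : EuclideanSpace ℝ (Fin m ⊕ Fin s) → Matrix (Fin m) (Fin m) ℝ)
    (Juu Ruu : EuclideanSpace ℝ (Fin m ⊕ Fin s) → Matrix (Fin s) (Fin s) ℝ)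
    (Jau Rau : EuclideanSpace ℝ (Fin m ⊕ Fin s) → Matrix (Fin m) (Fin s) ℝ)
    (hJaa : ∀ x, (Jaa x)ᵀ = -(Jaa x)) (hJuu : ∀ x, (Juu x)ᵀ = -(Juu x))
    (hRaa : ∀ x, (Raa x).IsSymm) (hRuu : ∀ x, (Ruu x).IsSymm)
    (Ki Dc1 Dc2 Dc3 : Matrix (Fin m) (Fin m) ℝ)
    (hKisymm : Ki.IsSymm) (hKi : Ki.PosDef)
    (hDc1symm : Dc1.IsSymm) (hDc1 : Dc1.PosDef)
    (hDc2symm : Dc2.IsSymm) (hDc2 : Dc2.PosDef)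
    (hDc3symm : Dc3.IsSymm) (hDc3 : Dc3.PosDef)
    (d : Fin m → ℝ)
    (W : EuclideanSpace ℝ (Fin m ⊕ (Fin s ⊕ Fin m)) → ℝ)
    (hW : W = fun w =>
      H (toE (Sum.elim (fun i => toV w (Sum.inl i)) (fun j => toV w (Sum.inr (Sum.inl j))))) +
      (1 / 2) * (((fun i => toV w (Sum.inr (Sum.inr i))) + Ki⁻¹.mulVec ((Dc1 + Dc3)⁻¹.mulVec d)) ⬝ᵥ
        Ki.mulVec ((fun i => toV w (Sum.inr (Sum.inr i))) + Ki⁻¹.mulVec ((Dc1 + Dc3)⁻¹.mulVec d))))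
    (xa xc : ℝ → Fin m → ℝ) (xu : ℝ → Fin s → ℝ) (t : ℝ)
    -- state, gradient blocks and the control law at time `t`
    (X : EuclideanSpace ℝ (Fin m ⊕ Fin s)) (hX : X = toE (Sum.elim (xa t) (xu t)))
    (ga : Fin m → ℝ) (hga : ga = fun i => toV (gradient H X) (Sum.inl i))
    (gu : Fin s → ℝ) (hgu : gu = fun j => toV (gradient H X) (Sum.inr j))
    (u : Fin m → ℝ)
    (hu : u = -(Jaa X + Dc1 + Dc2 + Dc3).mulVec ga - (Dc1 + Dc3).mulVec (Ki.mulVec (xa t - xc t)))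
    -- the disturbed open-loop dynamics in closed loop with the controller
    (hxa : HasDerivAt xa
      ((Jaa X - Raa X).mulVec ga + (Jau X - Rau X).mulVec gu + u - d) t)
    (hxu : HasDerivAt xu
      ((-(Jau X)ᵀ - (Rau X)ᵀ).mulVec ga + (Juu X - Ruu X).mulVec gu) t)
    (hxc : HasDerivAt xc (-(Dc2 + Dc3).mulVec ga + (Jau X).mulVec gu) t) :
    HasDerivAt (fun τ => toE (Sum.elim (xa τ) (Sum.elim (xu τ) (xa τ - xc τ))))
      (toE (((Matrix.fromBlocks (0 : Matrix (Fin m) (Fin m) ℝ)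
            (Matrix.fromCols (Jau X) (0 : Matrix (Fin m) (Fin m) ℝ))
            (Matrix.fromRows (-(Jau X)ᵀ) (0 : Matrix (Fin m) (Fin m) ℝ))
            (Matrix.fromBlocks (Juu X) (0 : Matrix (Fin s) (Fin m) ℝ)
              (0 : Matrix (Fin m) (Fin s) ℝ) (0 : Matrix (Fin m) (Fin m) ℝ)))
          - (Matrix.fromBlocks (Raa X + Dc1 + Dc2 + Dc3)
              (Matrix.fromCols (Rau X) (Dc1 + Dc3))
              (Matrix.fromRows (Rau X)ᵀ (Raa X + Dc1))
              (Matrix.fromBlocks (Ruu X) (0 : Matrix (Fin s) (Fin m) ℝ)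
                (Rau X) (Dc1 + Dc3)))).mulVec
        (toV (gradient W (toE (Sum.elim (xa t) (Sum.elim (xu t) (xa t - xc t)))))))) t :=
  stmt_16_general H hH Jaa Raa Juu Ruu Jau Rau Ki Dc1 Dc2 Dc3 hKisymm hKi hDc1 hDc3 d W hW xa xc xu
    t X hX ga hga gu hgu u hu hxa hxu hxc
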